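/- Let k ≥ 1 and let U ∈ P^{(k)} satisfy ‖U − I‖₂ ≤ δ for some δ < 2^{−k+3/2}. Then there exists θ ∈ [−2δ, 2δ] such that U = e^{iθ} I. -/

import Mathlib

open Matrix Complex

namespace CH

variable (d n : ℕ) [NeZero d]

/-- Phase space `F_d^{2n}`, written as pairs `(u, v)` with `u, v ∈ F_d^n`. -/
abbrev PSpace := (Fin n → ZMod d) × (Fin n → ZMod d)

/-- Linear maps on `ℂ^{F_d^n}`, as matrices. -/
abbrev Mat := Matrix (Fin n → ZMod d) (Fin n → ZMod d) ℂ

/-- `ω = e^{2πi/d}`. -/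
noncomputable def omg : ℂ := Complex.exp (2 * Real.pi * Complex.I / d)

/-- `τ = (-1)^d e^{iπ/d}`. -/
noncomputable def tau : ℂ := (-1 : ℂ) ^ d * Complex.exp (Real.pi * Complex.I / d)

/-- `D = 2d` if `d = 2`, else `D = d`. -/
def Dd : ℕ := if d = 2 then 4 else d

/-- The translation operator `X^v`, with `X^v |u⟩ = |u + v⟩`. -/
noncomputable def Xop (v : Fin n → ZMod d) : Mat d n :=
  Matrix.of fun u u' => if u = u' + v then 1 else 0

/-- The phase operator `Z^v`, with `Z^v |u⟩ = ω^{u·v} |u⟩`. -/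
noncomputable def Zop (v : Fin n → ZMod d) : Mat d n :=
  Matrix.diagonal fun u => omg d ^ (∑ i, u i * v i : ZMod d).val

/-- The Weyl operator `W_{(u,v)} = τ^{-(|u₁v₁| + ⋯ + |uₙvₙ|)} Z^u X^v`. -/
noncomputable def Weyl (a : PSpace d n) : Mat d n :=
  tau d ^ (-(∑ i, ((a.1 i * a.2 i).val : ℤ))) • (Zop d n a.1 * Xop d n a.2)

/-- Normalized trace inner product `⟨A,B⟩ = d^{-n} tr(A* B)`. -/
noncomputable def trInner (A B : Mat d n) : ℂ := ((d : ℂ) ^ n)⁻¹ * (Aᴴ * B).trace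

/-- Normalized Frobenius norm `‖A‖₂ = ⟨A,A⟩^{1/2}`. -/
noncomputable def hsNorm (A : Mat d n) : ℝ := Real.sqrt (trInner d n A A).re

/-- Pauli derivative `∂_h U = W_h U W_h* U*`. -/
noncomputable def pderiv (h : PSpace d n) (U : Mat d n) : Mat d n :=
  Weyl d n h * U * (Weyl d n h)ᴴ * Uᴴ

/-- The quantity `‖U‖_{P^k}^{2^k} = E_{h₁,…,h_k} d^{-n} tr(∂_{h_k} ⋯ ∂_{h₁} U)`. -/
noncomputable def pq : ℕ → Mat d n → ℂ
  | 0, U => ((d : ℂ) ^ n)⁻¹ * U.trace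
  | (k+1), U => ((d : ℂ) ^ (2*n))⁻¹ * ∑ h : PSpace d n, pq k (pderiv d n h U)

/-- The `k`-th Pauli uniformity norm `‖U‖_{P^k}`, the `2^k`-th root of `pq k U`. -/
noncomputable def pnorm (k : ℕ) (U : Mat d n) : ℝ := (pq d n k U).re ^ (((2:ℝ) ^ k)⁻¹)

/-- The Pauli group `C^{(1)} = {τ^p W_h : p ∈ Z_D, h ∈ F_d^{2n}}`. -/
def pauliGroup : Set (Mat d n) :=
  {U | ∃ (p : ℕ) (h : PSpace d n), U = tau d ^ p • Weyl d n h}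

/-- The Clifford hierarchy. -/
def cliff : ℕ → Set (Mat d n)
  | 0 => {U | ∃ θ : ℝ, U = Complex.exp (θ * Complex.I) • (1 : Mat d n)}
  | 1 => pauliGroup d n
  | (k+2) => {U | U ∈ unitary (Mat d n) ∧
      ∀ P ∈ pauliGroup d n, U * P * Uᴴ ∈ cliff (k+1)}

/-- Pauli polynomials of degree at most `k`. -/
def ppoly : ℕ → Set (Mat d n)
  | 0 => {U | ∃ θ : ℝ, U = Complex.exp (θ * Complex.I) • (1 : Mat d n)}
  | (k+1) => {U | U ∈ unitary (Mat d n) ∧ ∀ h : PSpace d n, pderiv d n h U ∈ ppoly k}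

/-- Symplectic form `[(u,v),(u',v')] = u·v' - u'·v` on `F_d^{2n}`. -/
def symp (a b : PSpace d n) : ZMod d :=
  (∑ i, a.1 i * b.2 i) - (∑ i, b.1 i * a.2 i)

/-- Multiplication of the Heisenberg group. -/
def heisMul (β : PSpace d n → PSpace d n → ZMod (Dd d))
    (x y : ZMod (Dd d) × PSpace d n) : ZMod (Dd d) × PSpace d n :=
  (x.1 + y.1 + β x.2 y.2, x.2 + y.2)

end CH

/-!
Induction on the degree. If `U` has degree `k + 1`, every `∂_h U` has degree `k`, and
`‖∂_h U - I‖₂ ≤ 2 ‖U - I‖₂` because `‖·‖₂` is unitarily invariant; hence all derivatives of `U`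
are phases. So `W_h U W_h* = c_h U` for every `h`. As `‖U - I‖₂² = 2 - 2 Re tr U / d^n < 2`, the
trace of `U` is nonzero, and taking traces gives `c_h = 1`: `U` commutes with every `Z^u` and
every `X^v`, which forces it to be a scalar `λ I`. The arc-chord inequality
`|arg λ| ≤ (π / 2) |λ - 1|` then bounds the phase by `2δ`.
-/

attribute [local instance] Matrix.frobeniusNormedAddCommGroup Matrix.frobeniusNormSMulClass

section Frobenius

variable {m n : Type*} [Fintype m] [Fintype n]

theorem Matrix.conjTranspose_mul_self_of_mem_unitary {α : Type*} [Semiring α] [StarRing α]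
    [DecidableEq m] {U : Matrix m m α} (hU : U ∈ unitary (Matrix m m α)) : Uᴴ * U = 1 :=
  Unitary.star_mul_self_of_mem hU

theorem Matrix.mul_conjTranspose_self_of_mem_unitary {α : Type*} [Semiring α] [StarRing α]
    [DecidableEq m] {U : Matrix m m α} (hU : U ∈ unitary (Matrix m m α)) : U * Uᴴ = 1 :=
  Unitary.mul_star_self_of_mem hU

theorem Matrix.frobenius_norm_sq_eq_re_trace (A : Matrix m n ℂ) :
    ‖A‖ ^ 2 = (Aᴴ * A).trace.re := by
  change ‖WithLp.toLp 2 fun i => WithLp.toLp 2 (A i)‖ ^ 2 = _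
  rw [← Matrix.star_vec_dotProduct_vec, dotProduct, Complex.re_sum, Fintype.sum_prod_type,
    Finset.sum_comm]
  simp only [PiLp.norm_sq_eq_of_L2, Matrix.vec, Pi.star_apply, Complex.star_def,
    Complex.conj_mul', ← Complex.ofReal_pow, Complex.ofReal_re]

theorem Matrix.frobenius_norm_mul_of_mem_unitary [DecidableEq n] (A : Matrix m n ℂ)
    {V : Matrix n n ℂ} (hV : V ∈ unitary (Matrix n n ℂ)) : ‖A * V‖ = ‖A‖ := by
  rw [← sq_eq_sq₀ (norm_nonneg _) (norm_nonneg _), frobenius_norm_sq_eq_re_trace,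
    frobenius_norm_sq_eq_re_trace, conjTranspose_mul, Matrix.mul_assoc, trace_mul_comm,
    Matrix.mul_assoc, Matrix.mul_assoc, mul_conjTranspose_self_of_mem_unitary hV,
    Matrix.mul_one]

theorem Matrix.frobenius_norm_mul_of_mem_unitary_left [DecidableEq m] {W : Matrix m m ℂ}
    (hW : W ∈ unitary (Matrix m m ℂ)) (A : Matrix m n ℂ) : ‖W * A‖ = ‖A‖ := by
  rw [← sq_eq_sq₀ (norm_nonneg _) (norm_nonneg _), frobenius_norm_sq_eq_re_trace,
    frobenius_norm_sq_eq_re_trace, conjTranspose_mul, Matrix.mul_assoc, ← Matrix.mul_assoc Wᴴ,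
    conjTranspose_mul_self_of_mem_unitary hW, Matrix.one_mul]

theorem Matrix.frobenius_norm_one [DecidableEq m] :
    ‖(1 : Matrix m m ℂ)‖ = √(Fintype.card m) := by
  rw [← Real.sqrt_sq (norm_nonneg _), frobenius_norm_sq_eq_re_trace, conjTranspose_one,
    Matrix.one_mul, trace_one, Complex.natCast_re]

theorem Matrix.frobenius_norm_sub_one_sq_of_mem_unitary [DecidableEq m] {U : Matrix m m ℂ}
    (hU : U ∈ unitary (Matrix m m ℂ)) :
    ‖U - 1‖ ^ 2 = 2 * Fintype.card m - 2 * U.trace.re := by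
  rw [frobenius_norm_sq_eq_re_trace, conjTranspose_sub, conjTranspose_one, sub_mul, mul_sub,
    mul_sub, conjTranspose_mul_self_of_mem_unitary hU]
  simp only [Matrix.mul_one, Matrix.one_mul, trace_sub, trace_one, trace_conjTranspose,
    Complex.sub_re, Complex.star_def, Complex.conj_re, Complex.natCast_re]
  ring

end Frobenius

theorem Complex.abs_arg_le_pi_div_two_mul_norm_sub_one {z : ℂ} (hz : ‖z‖ = 1) :
    |z.arg| ≤ Real.pi / 2 * ‖z - 1‖ := by
  rw [← angle_one_right (norm_ne_zero_iff.mp (hz ▸ one_ne_zero))]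
  exact angle_le_mul_norm_sub hz norm_one

namespace CH

section

variable {d n : ℕ}

lemma norm_tau : ‖tau d‖ = 1 := by
  have h : (Real.pi * Complex.I / d : ℂ) = ((Real.pi / d : ℝ) : ℂ) * Complex.I := by
    push_cast; ring
  rw [tau, norm_mul, h, Complex.norm_exp_ofReal_mul_I]
  simp

lemma Xop_zero : Xop d n 0 = 1 := by
  ext a b
  simp [Xop, Matrix.one_apply]

lemma Zop_zero : Zop d n 0 = 1 := by
  simp [Zop]

lemma conjTranspose_Xop (v : Fin n → ZMod d) : (Xop d n v)ᴴ = Xop d n (-v) := by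
  ext a b
  simp [Xop, ← sub_eq_add_neg, eq_sub_iff_add_eq, eq_comm]

variable [NeZero d]

lemma card_fun_zmod : Fintype.card (Fin n → ZMod d) = d ^ n := by
  simp

lemma sqrt_pow_pos : 0 < √((d : ℝ) ^ n) := by
  have : (0 : ℝ) < d := Nat.cast_pos.mpr (NeZero.pos d)
  positivity

lemma isPrimitiveRoot_omg : IsPrimitiveRoot (omg d) d := by
  simpa [omg] using Complex.isPrimitiveRoot_exp d (NeZero.ne d)

lemma omg_pow_val_injective : Function.Injective fun t : ZMod d => omg d ^ t.val :=
  fun s t h => ZMod.val_injective d <|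
    isPrimitiveRoot_omg.pow_inj (ZMod.val_lt s) (ZMod.val_lt t) h

lemma Weyl_zero_left (v : Fin n → ZMod d) : Weyl d n (0, v) = Xop d n v := by
  simp [Weyl, Zop_zero]

lemma Weyl_zero_right (u : Fin n → ZMod d) : Weyl d n (u, 0) = Zop d n u := by
  simp [Weyl, Xop_zero]

lemma Xop_mul_apply (v : Fin n → ZMod d) (M : Mat d n) (a b : Fin n → ZMod d) :
    (Xop d n v * M) a b = M (a - v) b := by
  simp [Xop, Matrix.mul_apply, ← sub_eq_iff_eq_add, eq_comm]

lemma mul_Xop_apply (v : Fin n → ZMod d) (M : Mat d n) (a b : Fin n → ZMod d) :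
    (M * Xop d n v) a b = M a (b + v) := by
  simp [Xop, Matrix.mul_apply]

lemma Zop_mul_apply (u : Fin n → ZMod d) (M : Mat d n) (a b : Fin n → ZMod d) :
    (Zop d n u * M) a b = omg d ^ (∑ i, a i * u i).val * M a b :=
  Matrix.diagonal_mul _ _ _ _

lemma mul_Zop_apply (u : Fin n → ZMod d) (M : Mat d n) (a b : Fin n → ZMod d) :
    (M * Zop d n u) a b = M a b * omg d ^ (∑ i, b i * u i).val :=
  Matrix.mul_diagonal _ _ _ _

lemma Xop_mem_unitary (v : Fin n → ZMod d) : Xop d n v ∈ unitary (Mat d n) := by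
  refine Matrix.mem_unitaryGroup_iff.mpr ?_
  ext a b
  rw [Matrix.star_eq_conjTranspose, conjTranspose_Xop, mul_Xop_apply, Xop, Matrix.of_apply,
    Matrix.one_apply]
  simp

lemma Zop_mem_unitary (u : Fin n → ZMod d) : Zop d n u ∈ unitary (Mat d n) := by
  refine Matrix.mem_unitaryGroup_iff.mpr ?_
  rw [Matrix.star_eq_conjTranspose, Zop, Matrix.diagonal_conjTranspose,
    Matrix.diagonal_mul_diagonal, ← Matrix.diagonal_one]
  congr 1
  ext a
  rw [Pi.star_apply, RCLike.star_def, RCLike.mul_conj, norm_pow,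
    isPrimitiveRoot_omg.norm'_eq_one (NeZero.ne d)]
  simp

lemma Weyl_mem_unitary (h : PSpace d n) : Weyl d n h ∈ unitary (Mat d n) := by
  refine Unitary.smul_mem_of_mem ?_ (mul_mem (Zop_mem_unitary _) (Xop_mem_unitary _))
  rw [Unitary.mem_iff_star_mul_self, RCLike.star_def, RCLike.conj_mul, norm_zpow, norm_tau]
  simp

/-- Commuting with `Z^u` kills the off-diagonal entries (the characters `ω^{⟨·,u⟩}` separate
points), commuting with `X^v` makes the diagonal constant. -/
lemma eq_smul_one_of_forall_commute_Weyl {U : Mat d n} (hU : ∀ h, Commute (Weyl d n h) U) :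
    U = U 0 0 • 1 := by
  have hX : ∀ v a b : Fin n → ZMod d, U (a - v) b = U a (b + v) := fun v a b => by
    have := congrFun₂ (hU (0, v)).eq a b
    rwa [Weyl_zero_left, Xop_mul_apply, mul_Xop_apply] at this
  have hZ : ∀ u a b : Fin n → ZMod d, omg d ^ (∑ i, a i * u i).val * U a b
      = U a b * omg d ^ (∑ i, b i * u i).val := fun u a b => by
    have := congrFun₂ (hU (u, 0)).eq a b
    rwa [Weyl_zero_right, Zop_mul_apply, mul_Zop_apply] at this
  ext a b
  rcases eq_or_ne a b with rfl | hab
  · simpa using (hX a a 0).symm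
  · obtain ⟨j, hj⟩ : ∃ j, a j ≠ b j := Function.ne_iff.mp hab
    have hphase := hZ (Pi.single j 1) a b
    simp only [Pi.single_apply, mul_ite, mul_one, mul_zero, Finset.sum_ite_eq',
      Finset.mem_univ, if_true] at hphase
    rw [Matrix.smul_apply, Matrix.one_apply_ne hab, smul_zero]
    by_contra hUab
    rw [mul_comm] at hphase
    exact omg_pow_val_injective.ne hj (mul_left_cancel₀ hUab hphase)

lemma norm_eq_one_of_smul_one_mem_unitary {c : ℂ}
    (hc : c • (1 : Mat d n) ∈ unitary (Mat d n)) : ‖c‖ = 1 := by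
  have h := congrFun₂ (conjTranspose_mul_self_of_mem_unitary hc) 0 0
  simp only [conjTranspose_smul, conjTranspose_one, smul_mul_smul_comm, Matrix.smul_apply,
    Matrix.one_apply_eq, smul_eq_mul, mul_one, Complex.star_def, Complex.conj_mul'] at h
  exact (pow_eq_one_iff_of_nonneg (norm_nonneg c) two_ne_zero).mp (by exact_mod_cast h)

lemma hsNorm_eq_frobenius_norm (A : Mat d n) : hsNorm d n A = ‖A‖ / √((d : ℝ) ^ n) := by
  have hre : (trInner d n A A).re = ‖A‖ ^ 2 / d ^ n := by
    rw [trInner, frobenius_norm_sq_eq_re_trace, ← Complex.ofReal_natCast, ← Complex.ofReal_pow,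
      ← Complex.ofReal_inv, Complex.re_ofReal_mul, inv_mul_eq_div]
  rw [hsNorm, hre, Real.sqrt_div' _ (by positivity), Real.sqrt_sq (norm_nonneg _)]

lemma hsNorm_sub_le (A B : Mat d n) : hsNorm d n (A - B) ≤ hsNorm d n A + hsNorm d n B := by
  simp only [hsNorm_eq_frobenius_norm, ← add_div]
  gcongr
  exact norm_sub_le A B

lemma hsNorm_mul_of_mem_unitary (A : Mat d n) {V : Mat d n} (hV : V ∈ unitary (Mat d n)) :
    hsNorm d n (A * V) = hsNorm d n A := by
  rw [hsNorm_eq_frobenius_norm, hsNorm_eq_frobenius_norm, frobenius_norm_mul_of_mem_unitary A hV]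

lemma hsNorm_mul_of_mem_unitary_left {W : Mat d n} (hW : W ∈ unitary (Mat d n)) (A : Mat d n) :
    hsNorm d n (W * A) = hsNorm d n A := by
  rw [hsNorm_eq_frobenius_norm, hsNorm_eq_frobenius_norm,
    frobenius_norm_mul_of_mem_unitary_left hW A]

lemma hsNorm_smul_one (c : ℂ) : hsNorm d n (c • 1) = ‖c‖ := by
  rw [hsNorm_eq_frobenius_norm, norm_smul, frobenius_norm_one, card_fun_zmod, Nat.cast_pow,
    mul_div_assoc, div_self sqrt_pow_pos.ne', mul_one]

lemma trace_ne_zero_of_hsNorm_sub_one_lt {U : Mat d n} (hU : U ∈ unitary (Mat d n))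
    (hlt : hsNorm d n (U - 1) < √2) : U.trace ≠ 0 := by
  intro htr
  have hsq := frobenius_norm_sub_one_sq_of_mem_unitary hU
  rw [htr, Complex.zero_re, mul_zero, sub_zero, card_fun_zmod, Nat.cast_pow] at hsq
  refine hlt.ne ?_
  rw [hsNorm_eq_frobenius_norm, ← Real.sqrt_sq (norm_nonneg (U - 1)), hsq,
    Real.sqrt_mul zero_le_two, mul_div_assoc, div_self sqrt_pow_pos.ne', mul_one]

lemma pderiv_mul_self {U : Mat d n} (hU : U ∈ unitary (Mat d n)) (h : PSpace d n) :
    pderiv d n h U * U = Weyl d n h * U * (Weyl d n h)ᴴ := by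
  rw [pderiv, Matrix.mul_assoc _ Uᴴ, conjTranspose_mul_self_of_mem_unitary hU, Matrix.mul_one]

lemma hsNorm_pderiv_sub_one_le {U : Mat d n} (hU : U ∈ unitary (Mat d n)) (h : PSpace d n) :
    hsNorm d n (pderiv d n h U - 1) ≤ 2 * hsNorm d n (U - 1) := by
  set W := Weyl d n h
  have hW : W ∈ unitary (Mat d n) := Weyl_mem_unitary h
  have hkey : (pderiv d n h U - 1) * U = W * (U - 1) * Wᴴ - (U - 1) := by
    rw [Matrix.sub_mul, pderiv_mul_self hU, Matrix.mul_sub, Matrix.sub_mul, Matrix.mul_one,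
      Matrix.one_mul, mul_conjTranspose_self_of_mem_unitary hW]
    abel
  calc hsNorm d n (pderiv d n h U - 1)
      = hsNorm d n (W * (U - 1) * Wᴴ - (U - 1)) := by
        rw [← hkey, hsNorm_mul_of_mem_unitary _ hU]
    _ ≤ hsNorm d n (W * (U - 1) * Wᴴ) + hsNorm d n (U - 1) := hsNorm_sub_le _ _
    _ = 2 * hsNorm d n (U - 1) := by
        rw [hsNorm_mul_of_mem_unitary (V := Wᴴ) _ (Unitary.star_mem hW),
          hsNorm_mul_of_mem_unitary_left hW, two_mul]

lemma commute_Weyl_of_pderiv_eq_smul_one {U : Mat d n} (hU : U ∈ unitary (Mat d n))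
    (htr : U.trace ≠ 0) {h : PSpace d n} {c : ℂ} (hc : pderiv d n h U = c • 1) :
    Commute (Weyl d n h) U := by
  set W := Weyl d n h
  have hW : W ∈ unitary (Mat d n) := Weyl_mem_unitary h
  have hconj : W * U * Wᴴ = c • U := by
    rw [← pderiv_mul_self hU, hc, Matrix.smul_mul, Matrix.one_mul]
  have hc1 : c = 1 := by
    have htrace := congrArg Matrix.trace hconj
    rw [Matrix.trace_mul_cycle, conjTranspose_mul_self_of_mem_unitary hW, Matrix.one_mul,
      Matrix.trace_smul, smul_eq_mul] at htrace
    exact (mul_eq_right₀ htr).mp htrace.symm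
  rw [hc1, one_smul] at hconj
  calc W * U = W * U * Wᴴ * W := by
        rw [Matrix.mul_assoc _ Wᴴ, conjTranspose_mul_self_of_mem_unitary hW, Matrix.mul_one]
    _ = U * W := by rw [hconj]

lemma exists_phase_of_mem_ppoly_one {U : Mat d n} (hU : U ∈ ppoly d n 1) {δ : ℝ}
    (hUδ : hsNorm d n (U - 1) ≤ δ) (hδ : δ < √2) :
    ∃ θ ∈ Set.Icc (-(2 * δ)) (2 * δ), U = Complex.exp (θ * Complex.I) • (1 : Mat d n) := by
  obtain ⟨hUu, hder⟩ := hU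
  have htr := trace_ne_zero_of_hsNorm_sub_one_lt hUu (hUδ.trans_lt hδ)
  have hscalar : U = U 0 0 • 1 := eq_smul_one_of_forall_commute_Weyl fun h =>
    commute_Weyl_of_pderiv_eq_smul_one hUu htr (hder h).choose_spec
  set c := U 0 0
  have hc : ‖c‖ = 1 := norm_eq_one_of_smul_one_mem_unitary (hscalar ▸ hUu)
  have hdist : ‖c - 1‖ ≤ δ := by
    have hsub : U - 1 = (c - 1) • (1 : Mat d n) := by rw [sub_smul, one_smul, ← hscalar]
    rwa [hsub, hsNorm_smul_one] at hUδ
  refine ⟨c.arg, abs_le.mp ?_, ?_⟩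
  · calc |c.arg| ≤ Real.pi / 2 * ‖c - 1‖ := Complex.abs_arg_le_pi_div_two_mul_norm_sub_one hc
      _ ≤ 2 * δ := by nlinarith [Real.pi_le_four, norm_nonneg (c - 1)]
  · have hexp : Complex.exp (c.arg * Complex.I) = c := by
      simpa [hc] using Complex.norm_mul_exp_arg_mul_I c
    rwa [hexp]

lemma exists_phase_of_mem_ppoly_succ (k : ℕ) {U : Mat d n} (hU : U ∈ ppoly d n (k + 1))
    {δ : ℝ} (hUδ : hsNorm d n (U - 1) ≤ δ) (hδ : 2 ^ k * δ < √2) :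
    ∃ θ ∈ Set.Icc (-(2 * δ)) (2 * δ), U = Complex.exp (θ * Complex.I) • (1 : Mat d n) := by
  induction k generalizing U δ with
  | zero => exact exists_phase_of_mem_ppoly_one hU hUδ (by simpa using hδ)
  | succ k ih =>
    have hδ0 : 0 ≤ δ := (Real.sqrt_nonneg _).trans hUδ
    refine exists_phase_of_mem_ppoly_one ⟨hU.1, fun h => ?_⟩ hUδ ?_
    · obtain ⟨θ, -, hθ⟩ := ih (δ := 2 * δ) (hU.2 h)
        ((hsNorm_pderiv_sub_one_le hU.1 h).trans (by linarith)) (by rw [pow_succ] at hδ; linarith)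
      exact ⟨θ, hθ⟩
    · nlinarith [one_le_pow₀ (M₀ := ℝ) (n := k + 1) one_le_two]

end

theorem stmt14_general (d n : ℕ) [NeZero d]
    (k : ℕ) (hk : 1 ≤ k) (U : Mat d n) (hU : U ∈ ppoly d n k)
    (δ : ℝ) (hUδ : hsNorm d n (U - 1) ≤ δ) (hδ : δ < (2:ℝ) ^ ((3:ℝ)/2 - k)) :
    ∃ θ ∈ Set.Icc (-(2 * δ)) (2 * δ),
      U = Complex.exp (θ * Complex.I) • (1 : Mat d n) := by
  obtain ⟨k, rfl⟩ := Nat.exists_eq_add_of_le' hk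
  refine exists_phase_of_mem_ppoly_succ k hU hUδ ?_
  have hsqrt : (2 : ℝ) ^ k * 2 ^ ((3:ℝ)/2 - ↑(k + 1)) = √2 := by
    rw [← Real.rpow_natCast, ← Real.rpow_add two_pos, Real.sqrt_eq_rpow]
    push_cast
    ring_nf
  rw [← hsqrt]
  gcongr

theorem stmt14 (d n : ℕ) [NeZero d] (hd : d.Prime) (hn : 1 ≤ n)
    (k : ℕ) (hk : 1 ≤ k) (U : Mat d n) (hU : U ∈ ppoly d n k)
    (δ : ℝ) (hUδ : hsNorm d n (U - 1) ≤ δ) (hδ : δ < (2:ℝ) ^ ((3:ℝ)/2 - k)) :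
    ∃ θ ∈ Set.Icc (-(2 * δ)) (2 * δ),
      U = Complex.exp (θ * Complex.I) • (1 : Mat d n) :=
  stmt14_general d n k hk U hU δ hUδ hδ

end CH
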